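/- Under the hypotheses of the previous subtree-vector conditions, for every vertex u, the number of indices j with S(u)_j = true equals the number of vertices in the subtree rooted at u. -/

import Mathlib

/-- A finite rooted tree with (linearly) ordered children: a rose tree. -/
inductive RTree : Type where
  | node : List RTree → RTree

namespace RTree

/-- The number of vertices of a rooted tree. -/
def size : RTree → ℕ
  | node ts => 1 + (ts.attach.map (fun x => size x.1)).sum
decreasing_by
  have := List.sizeOf_lt_of_mem x.2
  simp only [RTree.node.sizeOf_spec]
  omega

/-- The subtree rooted at the vertex addressed by the path `p` (a list of child
indices), if that vertex exists.  Vertices of the tree are exactly the paths `p`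
with `(subtreeAt p t).isSome`. -/
def subtreeAt : List ℕ → RTree → Option RTree
  | [], t => some t
  | i :: p, node ts => (ts[i]?).bind (subtreeAt p)


theorem myind {P : RTree → Prop}
    (h : ∀ ts, (∀ t ∈ ts, P t) → P (RTree.node ts)) : ∀ t, P t
  | RTree.node ts => h ts (fun t ht => myind h t)
decreasing_by
  have := List.sizeOf_lt_of_mem ht
  simp only [RTree.node.sizeOf_spec]
  omega

theorem size_node (ts : List RTree) :
    (node ts).size = 1 + ∑ i : Fin ts.length, (ts.get i).size := by
  rw [size]
  congr 1
  have h1 : (ts.attach.map (fun x => size x.1)).sum = (ts.map size).sum := by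
    simp [List.map_congr_left]
  rw [h1]
  conv_lhs => rw [← List.ofFn_get ts]
  rw [List.map_ofFn, List.sum_ofFn]
  simp

theorem subtreeAt_append (p q : List ℕ) (t : RTree) :
    subtreeAt (p ++ q) t = (subtreeAt p t).bind (subtreeAt q) := by
  induction p generalizing t with
  | nil => simp [subtreeAt]
  | cons i p ih =>
    cases t with
    | node ts =>
      simp only [List.cons_append, subtreeAt, Option.bind_assoc]
      cases ts[i]? with
      | none => simp
      | some u => simp [ih]

theorem subtreeAt_child {p : List ℕ} {t : RTree} {ts : List RTree}
    (h : subtreeAt p t = some (node ts)) (i : Fin ts.length) :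
    subtreeAt (p ++ [i.1]) t = some (ts.get i) := by
  rw [subtreeAt_append, h]
  simp [subtreeAt, List.getElem?_eq_getElem i.2]


end RTree

/-- Under the subtree-vector conditions (for every leaf `u`,
`S u j = true` iff `j = f u`; for every internal vertex `u` with children `v₁, …, v_k`
and every index `j`, one of the cases (a), (b), (c) holds), for every vertex `u` the
number of indices `j ∈ {1,…,n}` with `S u j = true` equals the number of vertices of the
subtree rooted at `u`. -/
theorem subtree_vectors_count_subtree_size (t : RTree) (n : ℕ) (hn : t.size = n)
    (f : List ℕ → ℕ) (S : List ℕ → ℕ → Bool)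
    (hf : ∀ p, (RTree.subtreeAt p t).isSome → f p ∈ Set.Icc 1 n)
    (hleaf : ∀ p, RTree.subtreeAt p t = some (RTree.node []) →
      ∀ j, S p j = true ↔ j = f p)
    (hint : ∀ p ts, RTree.subtreeAt p t = some (RTree.node ts) → ts ≠ [] → ∀ j,
      (S p j = false ∧ f p ≠ j ∧ ∀ i < ts.length, S (p ++ [i]) j = false) ∨
      (S p j = true ∧ f p ≠ j ∧ ∃! i, i < ts.length ∧ S (p ++ [i]) j = true) ∨
      (S p j = true ∧ f p = j ∧ ∀ i < ts.length, S (p ++ [i]) j = false)) :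
    ∀ p t', RTree.subtreeAt p t = some t' →
      ((Finset.Icc 1 n).filter (fun j => S p j = true)).card = t'.size := by
  intro p t'
  induction t' using RTree.myind generalizing p with
  | _ ts ih =>
  intro hp
  have hfp : f p ∈ Set.Icc 1 n := hf p (by rw [hp]; rfl)
  rcases eq_or_ne ts [] with rfl | hne
  · -- leaf
    have hl := hleaf p hp
    have : (Finset.Icc 1 n).filter (fun j => S p j = true) = {f p} := by
      ext j
      simp only [Finset.mem_filter, Finset.mem_singleton, Finset.mem_Icc]
      constructor
      · rintro ⟨_, hj⟩; exact (hl j).mp hj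
      · rintro rfl
        exact ⟨⟨hfp.1, hfp.2⟩, (hl _).mpr rfl⟩
    rw [this]
    simp [RTree.size]
  · -- internal
    have H := hint p ts hp hne
    set B : ℕ → Finset ℕ := fun i => (Finset.Icc 1 n).filter (fun j => S (p ++ [i]) j = true)
      with hB
    have key : (Finset.Icc 1 n).filter (fun j => S p j = true) =
        insert (f p) ((Finset.range ts.length).biUnion B) := by
      ext j
      simp only [Finset.mem_insert, Finset.mem_biUnion, Finset.mem_range, Finset.mem_filter, hB]
      constructor
      · rintro ⟨hjIcc, hjS⟩
        rcases H j with ⟨h1, -, -⟩ | ⟨-, -, i, ⟨hi, hSi⟩, -⟩ | ⟨-, h2, -⟩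
        · rw [hjS] at h1; exact absurd h1 (by simp)
        · exact Or.inr ⟨i, hi, hjIcc, hSi⟩
        · exact Or.inl h2.symm
      · rintro (rfl | ⟨i, hi, hjIcc, hSi⟩)
        · refine ⟨Finset.mem_Icc.mpr ⟨hfp.1, hfp.2⟩, ?_⟩
          rcases H (f p) with ⟨-, h2, -⟩ | ⟨-, h2, -⟩ | ⟨h1, -, -⟩ <;>
            first | exact absurd rfl h2 | exact h1
        · refine ⟨hjIcc, ?_⟩
          rcases H j with ⟨-, -, h3⟩ | ⟨h1, -, -⟩ | ⟨-, -, h3⟩ <;>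
            first | exact h1 | (rw [h3 i hi] at hSi; exact absurd hSi (by simp))
    rw [key]
    have hnotmem : f p ∉ (Finset.range ts.length).biUnion B := by
      simp only [Finset.mem_biUnion, Finset.mem_range, Finset.mem_filter, hB, not_exists]
      rintro i ⟨hi, -, hSi⟩
      rcases H (f p) with ⟨-, -, h3⟩ | ⟨-, h2, -⟩ | ⟨-, -, h3⟩
      · rw [h3 i hi] at hSi; exact absurd hSi (by simp)
      · exact h2 rfl
      · rw [h3 i hi] at hSi; exact absurd hSi (by simp)
    rw [Finset.card_insert_of_notMem hnotmem]
    have hdisj : ∀ i ∈ Finset.range ts.length, ∀ i' ∈ Finset.range ts.length, i ≠ i' →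
        Disjoint (B i) (B i') := by
      rintro i hi i' hi' hii'
      simp only [Finset.disjoint_left, Finset.mem_filter, hB]
      rintro j ⟨-, hSi⟩ ⟨-, hSi'⟩
      rcases H j with ⟨-, -, h3⟩ | ⟨-, -, iu, -, hu⟩ | ⟨-, -, h3⟩
      · rw [h3 i (Finset.mem_range.mp hi)] at hSi; exact absurd hSi (by simp)
      · exact hii' ((hu i ⟨Finset.mem_range.mp hi, hSi⟩).trans
          (hu i' ⟨Finset.mem_range.mp hi', hSi'⟩).symm)
      · rw [h3 i (Finset.mem_range.mp hi)] at hSi; exact absurd hSi (by simp)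
    rw [Finset.card_biUnion hdisj]
    have hsum : ∑ i ∈ Finset.range ts.length, (B i).card =
        ∑ i : Fin ts.length, (ts.get i).size := by
      rw [← Fin.sum_univ_eq_sum_range]
      exact Finset.sum_congr rfl fun i _ =>
        ih _ (ts.get_mem _) _ (RTree.subtreeAt_child hp i)
    rw [hsum, RTree.size_node]
    omega
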